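/- arXiv:2005.14543 — 3 statements merged into one kernel-verified Lean document; each statement's English description precedes it below -/
import Mathlib

section
/- Let p > 1 and ε > 0. Suppose U : [0,T) → ℝ is C², satisfies U''(t) ≥ U(t)^p and U(t) ≥ 0 on [0,T), with U(0) = ε·A ≥ 0 and U'(0) = ε·B for some fixed constants A ≥ 0 and B > 0. Then there exist constants ε₀ > 0 and C > 0 (depending only on A, B, p) such that for all 0 < ε ≤ ε₀, the maximal existence time satisfies T ≤ C · ε^{-(p-1)/(p+1)}. -/
/-!
Since `U'' ≥ U ^ p ≥ 0`, the slope `U'` never drops below `U'(0) = ε B > 0`, so `U t ≥ ε B t`.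
Multiplying `U'' ≥ U ^ p` by `U' ≥ 0` shows that the energy `U' ^ 2 - 2 / (p + 1) * U ^ (p + 1)`
is nondecreasing; for small `ε` it starts nonnegative, whence
`U' ≥ √(2 / (p + 1)) * U ^ ((p + 1) / 2)`.
Thus `W = U ^ (-(p - 1) / 2)` decreases with slope at most `-k`, `k = (p - 1) / 2 * √(2 / (p + 1))`,
and stays positive, so the solution lives at most `W t₀ / k` beyond any `t₀ > 0`. Taking
`t₀ = ε ^ (-(p - 1) / (p + 1))` balances `t₀` against `W t₀ / k ≤ (ε B t₀) ^ (-(p - 1) / 2) / k`.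
-/

open Set Filter Topology

lemma monotoneOn_Ico_of_hasDerivAt_nonneg {f f' : ℝ → ℝ} {a b : ℝ}
    (hf : ∀ t ∈ Ico a b, HasDerivAt f (f' t) t) (hf' : ∀ t ∈ Ico a b, 0 ≤ f' t) :
    MonotoneOn f (Ico a b) := by
  have hsub : interior (Ico a b) ⊆ Ico a b := interior_subset
  exact monotoneOn_of_hasDerivWithinAt_nonneg (convex_Ico a b)
    (fun t ht => (hf t ht).continuousAt.continuousWithinAt)
    (fun t ht => (hf t (hsub ht)).hasDerivWithinAt) (fun t ht => hf' t (hsub ht))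

lemma le_add_div_of_pos_of_hasDerivAt_le_neg {W W' : ℝ → ℝ} {k t₀ T : ℝ} (hk : 0 < k)
    (ht₀ : t₀ < T) (hW : ∀ t ∈ Ico t₀ T, HasDerivAt W (W' t) t)
    (hW' : ∀ t ∈ Ico t₀ T, W' t ≤ -k) (hpos : ∀ t ∈ Ico t₀ T, 0 < W t) :
    T ≤ t₀ + W t₀ / k := by
  have hmono : MonotoneOn (fun t => -W t - k * t) (Ico t₀ T) :=
    monotoneOn_Ico_of_hasDerivAt_nonneg (f' := fun t => -W' t - k)
      (fun t ht => ((hW t ht).neg.sub ((hasDerivAt_id t).const_mul k)).congr_deriv (by simp))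
      (fun t ht => by linarith [hW' t ht])
  have hlt : ∀ t ∈ Ico t₀ T, t < t₀ + W t₀ / k := by
    intro t ht
    have hdecay : W t + k * (t - t₀) ≤ W t₀ := by
      have := hmono ⟨le_rfl, ht₀⟩ ht ht.1
      linarith
    rw [← sub_lt_iff_lt_add', lt_div_iff₀ hk]
    linarith [hpos t ht]
  by_contra! h
  have := hlt (max t₀ (t₀ + W t₀ / k)) ⟨le_max_left _ _, max_lt ht₀ h⟩
  exact this.not_ge (le_max_right _ _)

lemma exists_pos_forall_rpow_mul_le {r L : ℝ} (hr : 0 < r) (hL : 0 < L) (K : ℝ) :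
    ∃ ε₀ > 0, ∀ ε : ℝ, 0 < ε → ε ≤ ε₀ → ε ^ r * K ≤ L := by
  have hlim : Tendsto (fun ε : ℝ => ε ^ r * K) (𝓝 0) (𝓝 0) := by
    simpa [Real.zero_rpow hr.ne'] using
      (Real.continuousAt_rpow_const 0 r (Or.inr hr.le)).tendsto.mul_const K
  obtain ⟨δ, hδ, hball⟩ := Metric.eventually_nhds_iff.1 (hlim.eventually (gt_mem_nhds hL))
  refine ⟨δ / 2, half_pos hδ, fun ε hε hεδ => (hball ?_).le⟩
  rw [Real.dist_eq, sub_zero, abs_of_pos hε]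
  linarith

noncomputable def katoRate (p : ℝ) : ℝ := (p - 1) / 2 * √(2 / (p + 1))

lemma katoRate_pos {p : ℝ} (hp : 1 < p) : 0 < katoRate p := by
  have : 0 < 2 / (p + 1) := by positivity
  have : 0 < p - 1 := by linarith
  unfold katoRate
  positivity

-- The left side is the derivative of `U ^ (-(p - 1) / 2)` at a point where `U = u` and `U' = v`.
lemma deriv_rpow_le_neg_of_energy_nonneg {p u v : ℝ} (hp : 1 ≤ p) (hu : 0 < u) (hv : 0 ≤ v)
    (henergy : 2 / (p + 1) * u ^ (p + 1) ≤ v ^ 2) :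
    v * (-(p - 1) / 2) * u ^ (-(p - 1) / 2 - 1) ≤ -katoRate p := by
  have hsq : (u ^ ((p + 1) / 2)) ^ 2 = u ^ (p + 1) := by
    rw [← Real.rpow_natCast, ← Real.rpow_mul hu.le]
    norm_num
  have hslope : √(2 / (p + 1)) * u ^ ((p + 1) / 2) ≤ v := by
    rw [← Real.sqrt_sq (Real.rpow_nonneg hu.le _), ← Real.sqrt_mul (by positivity), hsq]
    exact Real.sqrt_le_left hv |>.2 henergy
  have hinv : u ^ ((p + 1) / 2) * u ^ (-(p - 1) / 2 - 1) = 1 := by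
    rw [← Real.rpow_add hu, show (p + 1) / 2 + (-(p - 1) / 2 - 1) = 0 by ring, Real.rpow_zero]
  have hrate : √(2 / (p + 1)) ≤ v * u ^ (-(p - 1) / 2 - 1) := by
    calc √(2 / (p + 1)) = √(2 / (p + 1)) * u ^ ((p + 1) / 2) * u ^ (-(p - 1) / 2 - 1) := by
          rw [mul_assoc, hinv, mul_one]
      _ ≤ v * u ^ (-(p - 1) / 2 - 1) := by gcongr
  have hp' : 0 ≤ (p - 1) / 2 := by linarith
  unfold katoRate
  nlinarith [mul_le_mul_of_nonneg_left hrate hp']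

section Kato

variable {p T : ℝ} {U U' U'' : ℝ → ℝ}

lemma energy_monotoneOn (hp : 0 ≤ p) (hU : ∀ t ∈ Ico 0 T, HasDerivAt U (U' t) t)
    (hU' : ∀ t ∈ Ico 0 T, HasDerivAt U' (U'' t) t) (hU'nonneg : ∀ t ∈ Ico 0 T, 0 ≤ U' t)
    (hU'' : ∀ t ∈ Ico 0 T, U t ^ p ≤ U'' t) :
    MonotoneOn (fun t => U' t ^ 2 - 2 / (p + 1) * U t ^ (p + 1)) (Ico 0 T) := by
  refine monotoneOn_Ico_of_hasDerivAt_nonneg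
    (f' := fun t => 2 * U' t * (U'' t - U t ^ p)) (fun t ht => ?_)
    (fun t ht => mul_nonneg (mul_nonneg zero_le_two (hU'nonneg t ht)) (by linarith [hU'' t ht]))
  have hpow := (hU t ht).rpow_const (p := p + 1) (Or.inr (by linarith))
  refine (((hU' t ht).fun_pow 2).sub (hpow.const_mul (2 / (p + 1)))).congr_deriv ?_
  rw [add_sub_cancel_right]
  field_simp
  ring

-- Takamura's improved Kato lemma.
theorem le_add_div_of_rpow_le_deriv_deriv (hp : 1 < p)
    (hU : ∀ t ∈ Ico 0 T, HasDerivAt U (U' t) t) (hU' : ∀ t ∈ Ico 0 T, HasDerivAt U' (U'' t) t)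
    (hUnonneg : ∀ t ∈ Ico 0 T, 0 ≤ U t) (hU'' : ∀ t ∈ Ico 0 T, U t ^ p ≤ U'' t)
    (hU'0 : 0 < U' 0) (henergy : 2 / (p + 1) * U 0 ^ (p + 1) ≤ U' 0 ^ 2)
    {t₀ : ℝ} (ht₀ : 0 < t₀) (ht₀T : t₀ < T) :
    T ≤ t₀ + (U' 0 * t₀) ^ (-(p - 1) / 2) / katoRate p := by
  have h0 : (0 : ℝ) ∈ Ico 0 T := ⟨le_rfl, ht₀.trans ht₀T⟩
  have hsub : Ico t₀ T ⊆ Ico 0 T := Ico_subset_Ico_left ht₀.le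
  have hslope : ∀ t ∈ Ico 0 T, U' 0 ≤ U' t := fun t ht =>
    monotoneOn_Ico_of_hasDerivAt_nonneg hU'
      (fun t ht => (Real.rpow_nonneg (hUnonneg t ht) p).trans (hU'' t ht)) h0 ht ht.1
  have htangent : ∀ t ∈ Ico 0 T, U' 0 * t ≤ U t := by
    have hmono : MonotoneOn (fun t => U t - U' 0 * t) (Ico 0 T) :=
      monotoneOn_Ico_of_hasDerivAt_nonneg (f' := fun t => U' t - U' 0)
        (fun t ht => (hU t ht).sub ((hasDerivAt_id t).const_mul (U' 0)) |>.congr_deriv (by simp))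
        (fun t ht => by linarith [hslope t ht])
    intro t ht
    linarith [hmono h0 ht ht.1, hUnonneg 0 h0]
  have hpos : ∀ t ∈ Ico t₀ T, 0 < U t := fun t ht =>
    (mul_pos hU'0 (ht₀.trans_le ht.1)).trans_le (htangent t (hsub ht))
  have hU'nonneg : ∀ t ∈ Ico 0 T, 0 ≤ U' t := fun t ht => hU'0.le.trans (hslope t ht)
  have henergy_t : ∀ t ∈ Ico 0 T, 2 / (p + 1) * U t ^ (p + 1) ≤ U' t ^ 2 := by
    intro t ht
    linarith [energy_monotoneOn (by linarith) hU hU' hU'nonneg hU'' h0 ht ht.1]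
  have hk := katoRate_pos hp
  have hlife := le_add_div_of_pos_of_hasDerivAt_le_neg hk ht₀T
    (fun t ht => (hU t (hsub ht)).rpow_const (Or.inl (hpos t ht).ne'))
    (fun t ht => deriv_rpow_le_neg_of_energy_nonneg hp.le (hpos t ht) (hU'nonneg t (hsub ht))
      (henergy_t t (hsub ht)))
    (fun t ht => Real.rpow_pos_of_pos (hpos t ht) _)
  have hstart : U t₀ ^ (-(p - 1) / 2) ≤ (U' 0 * t₀) ^ (-(p - 1) / 2) :=
    Real.rpow_le_rpow_of_nonpos (mul_pos hU'0 ht₀) (htangent t₀ (hsub ⟨le_rfl, ht₀T⟩))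
      (by linarith)
  linarith [div_le_div_of_nonneg_right hstart hk.le]

end Kato

theorem stmt7_general (p A B : ℝ) (hp : 1 < p) (hB : 0 < B) :
    ∃ ε₀ > (0:ℝ), ∃ C > (0:ℝ), ∀ ε : ℝ, 0 < ε → ε ≤ ε₀ →
      ∀ T : ℝ, 0 < T →
      ∀ U U' U'' : ℝ → ℝ,
        (∀ t ∈ Set.Ico (0:ℝ) T, HasDerivAt U (U' t) t) →
        (∀ t ∈ Set.Ico (0:ℝ) T, HasDerivAt U' (U'' t) t) →
        ContinuousOn U'' (Set.Ico (0:ℝ) T) →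
        (∀ t ∈ Set.Ico (0:ℝ) T, U t ≥ 0) →
        (∀ t ∈ Set.Ico (0:ℝ) T, U'' t ≥ U t ^ p) →
        U 0 = ε * A → U' 0 = ε * B →
        T ≤ C * ε ^ (-(p - 1) / (p + 1)) := by
  have hk := katoRate_pos hp
  obtain ⟨ε₀, hε₀, hsmall⟩ := exists_pos_forall_rpow_mul_le (by linarith : 0 < p - 1)
    (pow_pos hB 2) (2 / (p + 1) * A ^ (p + 1))
  refine ⟨ε₀, hε₀, 1 + B ^ (-(p - 1) / 2) / katoRate p, by positivity, ?_⟩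
  intro ε hε hεε₀ T hT U U' U'' hU hU' _ hUnonneg hU'' hU0 hU'0
  set t₀ := ε ^ (-(p - 1) / (p + 1))
  have ht₀ : 0 < t₀ := Real.rpow_pos_of_pos hε _
  rcases le_or_gt T t₀ with hTt₀ | ht₀T
  · nlinarith [div_pos (Real.rpow_pos_of_pos hB (-(p - 1) / 2)) hk]
  have hA : 0 ≤ A := nonneg_of_mul_nonneg_right (hU0 ▸ hUnonneg 0 ⟨le_rfl, hT⟩) hε
  have henergy : 2 / (p + 1) * U 0 ^ (p + 1) ≤ U' 0 ^ 2 := by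
    have hsplit : ε ^ (p + 1) = ε ^ (p - 1) * ε ^ 2 := by
      rw [← Real.rpow_natCast, ← Real.rpow_add hε]; congr 1; push_cast; ring
    rw [hU0, hU'0, Real.mul_rpow hε.le hA, hsplit]
    nlinarith [hsmall ε hε hεε₀, pow_pos hε 2]
  have hscale : (ε * B * t₀) ^ (-(p - 1) / 2) = B ^ (-(p - 1) / 2) * t₀ := by
    have hεt₀ : ε * t₀ = ε ^ (1 + -(p - 1) / (p + 1)) := by rw [Real.rpow_add hε, Real.rpow_one]
    rw [mul_comm ε B, mul_assoc, Real.mul_rpow hB.le (mul_nonneg hε.le ht₀.le), hεt₀,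
      ← Real.rpow_mul hε.le]
    congr 2
    field_simp
    ring
  have hlife := le_add_div_of_rpow_le_deriv_deriv hp hU hU' hUnonneg hU'' (hU'0 ▸ mul_pos hε hB)
    henergy ht₀ ht₀T
  rw [hU'0, hscale, mul_div_right_comm] at hlife
  linarith

theorem stmt7 (p A B : ℝ) (hp : 1 < p) (hA : 0 ≤ A) (hB : 0 < B) :
    ∃ ε₀ > (0:ℝ), ∃ C > (0:ℝ), ∀ ε : ℝ, 0 < ε → ε ≤ ε₀ →
      ∀ T : ℝ, 0 < T →
      ∀ U U' U'' : ℝ → ℝ,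
        (∀ t ∈ Set.Ico (0:ℝ) T, HasDerivAt U (U' t) t) →
        (∀ t ∈ Set.Ico (0:ℝ) T, HasDerivAt U' (U'' t) t) →
        ContinuousOn U'' (Set.Ico (0:ℝ) T) →
        (∀ t ∈ Set.Ico (0:ℝ) T, U t ≥ 0) →
        (∀ t ∈ Set.Ico (0:ℝ) T, U'' t ≥ U t ^ p) →
        U 0 = ε * A → U' 0 = ε * B →
        T ≤ C * ε ^ (-(p - 1) / (p + 1)) :=
  stmt7_general p A B hp hB
end

section
/- Let p > 1 and ε > 0. Suppose U : [0,T) → ℝ is C², satisfies U''(t) ≥ U(t)^p and U(t) ≥ 0 on [0,T), with U(0) = ε·A > 0 and U'(0) = 0. Then there exist ε₀ > 0 and C > 0 depending only on A and p such that for all 0 < ε ≤ ε₀ the maximal existence time satisfies T ≤ C · ε^{-(p-1)/2}. -/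
/-!
Rescaling `s ↦ U (c s) / (ε A)` with `c = (ε A) ^ (-(p - 1) / 2)` reduces the problem to
`U 0 = 1`, `U' 0 = 0`, where the lifespan is bounded by a constant depending only on `p`.
There `U'' ≥ U ^ p ≥ 1` gives `U t ≥ 1 + t ^ 2 / 2 ≥ 2` for `t ≥ 2`. From then on the energy
inequality `U' ^ 2 ≥ 2 / (p + 1) * (U ^ (p + 1) - 1)` yields `U' ≥ U ^ ((p + 1) / 2) / √(p + 1)`,
along which `U ^ (-(p - 1) / 2)` decreases at a fixed positive rate, so it would have to become
negative after a further time `2 √(p + 1) / (p - 1)`.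
-/

open Set Real

lemma sub_le_sub_of_hasDerivAt_le {a b : ℝ} {f f' g g' : ℝ → ℝ}
    (hf : ∀ t ∈ Ico a b, HasDerivAt f (f' t) t) (hg : ∀ t ∈ Ico a b, HasDerivAt g (g' t) t)
    (hle : ∀ t ∈ Ico a b, g' t ≤ f' t) {t : ℝ} (ht : t ∈ Ico a b) :
    g t - g a ≤ f t - f a := by
  have hfg : ∀ t ∈ Ico a b, HasDerivAt (f - g) (f' t - g' t) t :=
    fun t ht ↦ (hf t ht).sub (hg t ht)
  have hmono : MonotoneOn (f - g) (Ico a b) := by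
    refine monotoneOn_of_hasDerivWithinAt_nonneg (f' := f' - g') (convex_Ico a b)
      (fun t ht ↦ (hfg t ht).continuousAt.continuousWithinAt) (fun t ht ↦ ?_) (fun t ht ↦ ?_)
    all_goals rw [interior_Ico] at ht
    · exact (hfg t (Ioo_subset_Ico_self ht)).hasDerivWithinAt
    · exact sub_nonneg.2 (hle t (Ioo_subset_Ico_self ht))
  have := hmono ⟨le_rfl, ht.1.trans_lt ht.2⟩ ht ht.1
  simp only [Pi.sub_apply] at this
  linarith

lemma mul_sub_le_rpow_of_le_deriv {a b k q : ℝ} {U U' : ℝ → ℝ} (hq : 0 < q) (hk : 0 < k)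
    (hab : a < b) (hU : ∀ t ∈ Ico a b, HasDerivAt U (U' t) t) (hpos : ∀ t ∈ Ico a b, 0 < U t)
    (hU' : ∀ t ∈ Ico a b, k * U t ^ (q + 1) ≤ U' t) :
    q * k * (b - a) ≤ U a ^ (-q) := by
  have hderiv : ∀ t ∈ Ico a b,
      HasDerivAt (fun s ↦ -U s ^ (-q)) (-(U' t * (-q) * U t ^ (-q - 1))) t :=
    fun t ht ↦ ((hU t ht).rpow_const (Or.inl (hpos t ht).ne')).neg
  have hlin : ∀ t ∈ Ico a b, HasDerivAt (fun s ↦ q * k * s) (q * k) t :=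
    fun t _ ↦ by simpa using (hasDerivAt_id t).const_mul (q * k)
  have hrate : ∀ t ∈ Ico a b, q * k ≤ -(U' t * (-q) * U t ^ (-q - 1)) := by
    intro t ht
    have hUq : U t ^ (q + 1) * U t ^ (-q - 1) = 1 := by
      rw [← rpow_add (hpos t ht)]; simp
    have := mul_le_mul_of_nonneg_right (hU' t ht) (rpow_nonneg (hpos t ht).le (-q - 1))
    rw [mul_assoc, hUq, mul_one] at this
    nlinarith
  by_contra! hlt
  have ha : a ∈ Ico a b := ⟨le_rfl, hab⟩
  set t := a + U a ^ (-q) / (q * k)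
  have hqk : 0 < q * k := mul_pos hq hk
  have ht : t ∈ Ico a b := by
    refine ⟨le_add_of_nonneg_right (div_nonneg (rpow_nonneg (hpos a ha).le _) hqk.le), ?_⟩
    have := (div_lt_iff₀' hqk).2 hlt
    linarith
  have hcmp := sub_le_sub_of_hasDerivAt_le hderiv hlin hrate ht
  have hUt := rpow_pos_of_pos (hpos t ht) (-q)
  have : q * k * t - q * k * a = U a ^ (-q) := by
    simp only [t]; field_simp; ring
  linarith

lemma energy_le {p a b : ℝ} {U U' U'' : ℝ → ℝ} (hp : 0 ≤ p)
    (hU : ∀ t ∈ Ico a b, HasDerivAt U (U' t) t) (hU' : ∀ t ∈ Ico a b, HasDerivAt U' (U'' t) t)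
    (hU'nonneg : ∀ t ∈ Ico a b, 0 ≤ U' t) (hODE : ∀ t ∈ Ico a b, U t ^ p ≤ U'' t)
    {t : ℝ} (ht : t ∈ Ico a b) :
    2 / (p + 1) * U t ^ (p + 1) - 2 / (p + 1) * U a ^ (p + 1) ≤ U' t ^ 2 - U' a ^ 2 := by
  have hkin : ∀ t ∈ Ico a b, HasDerivAt (fun s ↦ U' s ^ 2) (2 * U' t * U'' t) t :=
    fun t ht ↦ ((hU' t ht).fun_pow 2).congr_deriv (by push_cast; ring)
  have hpot : ∀ t ∈ Ico a b,
      HasDerivAt (fun s ↦ 2 / (p + 1) * U s ^ (p + 1)) (2 * U' t * U t ^ p) t := by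
    intro t ht
    have := ((hU t ht).rpow_const (p := p + 1) (Or.inr (by linarith))).const_mul (2 / (p + 1))
    refine this.congr_deriv ?_
    rw [add_sub_cancel_right]
    field_simp
  refine sub_le_sub_of_hasDerivAt_le hkin hpot (fun t ht ↦ ?_) ht
  have := mul_le_mul_of_nonneg_left (hODE t ht) (hU'nonneg t ht)
  linarith

lemma rpow_le_of_energy_ge {p u v : ℝ} (hp : 0 ≤ p) (hu : 2 ≤ u) (hv : 0 ≤ v)
    (hE : 2 / (p + 1) * (u ^ (p + 1) - 1) ≤ v ^ 2) :
    1 / √(p + 1) * u ^ ((p - 1) / 2 + 1) ≤ v := by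
  have hp1 : 0 < p + 1 := by linarith
  have hu2 : 2 ≤ u ^ (p + 1) :=
    hu.trans (by simpa using rpow_le_rpow_of_exponent_le (by linarith) (by linarith : 1 ≤ p + 1))
  have hsq : u ^ (p + 1) / (p + 1) ≤ v ^ 2 := by
    refine le_trans ?_ hE
    rw [div_mul_eq_mul_div, div_le_div_iff_of_pos_right hp1]
    linarith
  have hhalf : u ^ ((p - 1) / 2 + 1) = √(u ^ (p + 1)) := by
    rw [sqrt_eq_rpow, ← rpow_mul (by linarith)]
    ring_nf
  calc 1 / √(p + 1) * u ^ ((p - 1) / 2 + 1) = √(u ^ (p + 1) / (p + 1)) := by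
        rw [hhalf, sqrt_div' _ hp1.le]; ring
    _ ≤ √(v ^ 2) := sqrt_le_sqrt hsq
    _ = v := sqrt_sq hv

lemma lifespan_le_of_initial_one {p T : ℝ} {U U' U'' : ℝ → ℝ} (hp : 1 < p)
    (hU : ∀ t ∈ Ico 0 T, HasDerivAt U (U' t) t) (hU' : ∀ t ∈ Ico 0 T, HasDerivAt U' (U'' t) t)
    (hpos : ∀ t ∈ Ico 0 T, 0 ≤ U t) (hODE : ∀ t ∈ Ico 0 T, U t ^ p ≤ U'' t)
    (hU0 : U 0 = 1) (hU'0 : U' 0 = 0) :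
    T ≤ 2 + 2 * √(p + 1) / (p - 1) := by
  rcases le_or_gt T 2 with hT | hT
  · have : 0 ≤ 2 * √(p + 1) / (p - 1) := div_nonneg (by positivity) (by linarith)
    linarith
  have hU'nonneg : ∀ t ∈ Ico 0 T, 0 ≤ U' t := fun t ht ↦ by
    simpa [hU'0] using sub_le_sub_of_hasDerivAt_le hU' (fun t _ ↦ hasDerivAt_const t 0)
      (fun t ht ↦ (rpow_nonneg (hpos t ht) p).trans (hODE t ht)) ht
  have hU1 : ∀ t ∈ Ico 0 T, 1 ≤ U t := fun t ht ↦ by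
    simpa [hU0] using sub_le_sub_of_hasDerivAt_le hU (fun t _ ↦ hasDerivAt_const t 0)
      hU'nonneg ht
  have hU'lin : ∀ t ∈ Ico 0 T, t ≤ U' t := fun t ht ↦ by
    simpa [hU'0] using sub_le_sub_of_hasDerivAt_le hU' (fun t _ ↦ hasDerivAt_id t)
      (fun t ht ↦ (one_le_rpow (hU1 t ht) (by linarith)).trans (hODE t ht)) ht
  have hUquad : ∀ t ∈ Ico 0 T, 1 + t ^ 2 / 2 ≤ U t := fun t ht ↦ by
    have hsq : ∀ t ∈ Ico (0 : ℝ) T, HasDerivAt (fun s ↦ s ^ 2 / 2) t t := fun t _ ↦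
      ((hasDerivAt_pow 2 t).div_const 2).congr_deriv (by ring)
    have := sub_le_sub_of_hasDerivAt_le hU hsq hU'lin ht
    simp only [hU0] at this
    linarith
  have hsub : Ico 2 T ⊆ Ico 0 T := Ico_subset_Ico_left zero_le_two
  have hrate : ∀ t ∈ Ico 2 T, 1 / √(p + 1) * U t ^ ((p - 1) / 2 + 1) ≤ U' t := by
    intro t ht
    have henergy := energy_le (by linarith) hU hU' hU'nonneg hODE (hsub ht)
    simp only [hU0, hU'0, one_rpow] at henergy
    refine rpow_le_of_energy_ge (by linarith) ?_ (hU'nonneg t (hsub ht)) (by linarith)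
    nlinarith [hUquad t (hsub ht), ht.1]
  have hblowup := mul_sub_le_rpow_of_le_deriv (by linarith) (by positivity) hT
    (fun t ht ↦ hU t (hsub ht)) (fun t ht ↦ one_pos.trans_le (hU1 t (hsub ht))) hrate
  have hU2 : U 2 ^ (-((p - 1) / 2)) ≤ 1 :=
    rpow_le_one_of_one_le_of_nonpos (hU1 2 ⟨zero_le_two, hT⟩) (by linarith)
  have hsqrt : 0 < √(p + 1) := by positivity
  rw [← sub_le_iff_le_add', le_div_iff₀ (by linarith)]
  have := hblowup.trans hU2
  field_simp at this
  linarith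

lemma mul_mem_Ico_of_mem_Ico_div {c T s : ℝ} (hc : 0 < c) (hs : s ∈ Ico 0 (T / c)) :
    c * s ∈ Ico 0 T :=
  ⟨mul_nonneg hc.le hs.1, by rw [mul_comm]; exact (lt_div_iff₀ hc).1 hs.2⟩

lemma hasDerivAt_const_mul_comp_mul {T c d : ℝ} {f f' : ℝ → ℝ} (hc : 0 < c)
    (hf : ∀ t ∈ Ico 0 T, HasDerivAt f (f' t) t) :
    ∀ s ∈ Ico 0 (T / c), HasDerivAt (fun s ↦ d * f (c * s)) (d * c * f' (c * s)) s := fun s hs ↦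
  (((hf _ (mul_mem_Ico_of_mem_Ico_div hc hs)).comp s
    ((hasDerivAt_id s).const_mul c)).const_mul d).congr_deriv (by simp; ring)

lemma inv_mul_rpow_le_of_rpow_le {p B u w : ℝ} (hB : 0 < B) (hu : 0 ≤ u) (h : u ^ p ≤ w) :
    (B⁻¹ * u) ^ p ≤ B⁻¹ * B ^ (-(p - 1) / 2) * B ^ (-(p - 1) / 2) * w := by
  have hscale : B⁻¹ * B ^ (-(p - 1) / 2) * B ^ (-(p - 1) / 2) = B ^ (-p) := by
    rw [← rpow_neg_one, ← rpow_add hB, ← rpow_add hB]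
    ring_nf
  rw [hscale, mul_rpow (inv_nonneg.2 hB.le) hu, inv_rpow hB.le, ← rpow_neg hB.le]
  exact mul_le_mul_of_nonneg_left h (rpow_nonneg hB.le _)

theorem stmt8 (p A : ℝ) (hp : 1 < p) (hA : 0 < A) :
    ∃ ε₀ > (0:ℝ), ∃ C > (0:ℝ), ∀ ε : ℝ, 0 < ε → ε ≤ ε₀ →
      ∀ T : ℝ, 0 < T →
      ∀ U U' U'' : ℝ → ℝ,
        (∀ t ∈ Set.Ico (0:ℝ) T, HasDerivAt U (U' t) t) →
        (∀ t ∈ Set.Ico (0:ℝ) T, HasDerivAt U' (U'' t) t) →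
        ContinuousOn U'' (Set.Ico (0:ℝ) T) →
        (∀ t ∈ Set.Ico (0:ℝ) T, U t ≥ 0) →
        (∀ t ∈ Set.Ico (0:ℝ) T, U'' t ≥ U t ^ p) →
        U 0 = ε * A → U' 0 = 0 →
        T ≤ C * ε ^ (-(p - 1) / 2) := by
  have hC : 0 < 2 + 2 * √(p + 1) / (p - 1) := by
    have : 0 < p - 1 := by linarith
    positivity
  refine ⟨1, one_pos, (2 + 2 * √(p + 1) / (p - 1)) * A ^ (-(p - 1) / 2),
    mul_pos hC (rpow_pos_of_pos hA _), ?_⟩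
  intro ε hε _ T _ U U' U'' hU hU' _ hpos hODE hU0 hU'0
  have hB : 0 < ε * A := mul_pos hε hA
  set c := (ε * A) ^ (-(p - 1) / 2) with hc_def
  have hc : 0 < c := rpow_pos_of_pos hB _
  have hnormalized := lifespan_le_of_initial_one (T := T / c) hp
    (hasDerivAt_const_mul_comp_mul (d := (ε * A)⁻¹) hc hU)
    (hasDerivAt_const_mul_comp_mul (d := (ε * A)⁻¹ * c) hc hU')
    (fun s hs ↦ mul_nonneg (inv_nonneg.2 hB.le) (hpos _ (mul_mem_Ico_of_mem_Ico_div hc hs)))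
    (fun s hs ↦ inv_mul_rpow_le_of_rpow_le hB (hpos _ (mul_mem_Ico_of_mem_Ico_div hc hs))
      (hODE _ (mul_mem_Ico_of_mem_Ico_div hc hs)))
    (by simp only [mul_zero, hU0]; exact inv_mul_cancel₀ hB.ne') (by simp [hU'0])
  calc T = T / c * c := (div_mul_cancel₀ T hc.ne').symm
    _ ≤ (2 + 2 * √(p + 1) / (p - 1)) * c := mul_le_mul_of_nonneg_right hnormalized hc.le
    _ = _ := by rw [hc_def, mul_rpow hε.le hA.le]; ring
end

section
/- Let p > 1 and let U : [0,T) → ℝ be C² with U'' (t) ≥ U(t)^p, U(t) ≥ δ·t for all t ∈ [t₀, T) for some δ > 0 and t₀ ≥ 0, and U' ≥ 0. Then T < ∞. -/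
/-!
Along the trajectory the energy `(U')² - 2 U^(p+1) / (p+1)` is nondecreasing, because its
derivative is `2 U' (U'' - U^p) ≥ 0`. As `U → ∞`, this gives `U' ≳ U^((p+1)/2)` for large `t`,
so `W = U^(-(p-1)/2)` has derivative bounded above by a negative constant. Then `W → -∞`,
which is absurd for the positive function `W`.
-/

open Real Set Filter

section Energy

variable {U : ℝ → ℝ} {p a : ℝ}

theorem monotoneOn_energy (hp : p ≠ -1) (hU : Differentiable ℝ U)
    (hU' : Differentiable ℝ (deriv U)) (hpos : ∀ t ≥ a, 0 < U t)
    (hmono : ∀ t ≥ a, 0 ≤ deriv U t) (hineq : ∀ t ≥ a, U t ^ p ≤ deriv (deriv U) t) :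
    MonotoneOn (fun t => deriv U t ^ 2 - 2 / (p + 1) * U t ^ (p + 1)) (Ici a) := by
  have hderiv : ∀ t ≥ a, HasDerivAt (fun t => deriv U t ^ 2 - 2 / (p + 1) * U t ^ (p + 1))
      (2 * deriv U t * (deriv (deriv U) t - U t ^ p)) t := by
    intro t ht
    have hsq := (hU' t).hasDerivAt.fun_pow 2
    have hrpow := ((hU t).hasDerivAt.rpow_const (p := p + 1) (Or.inl (hpos t ht).ne')).const_mul
      (2 / (p + 1))
    refine (hsq.sub hrpow).congr_deriv ?_
    have : p + 1 ≠ 0 := fun h => hp (by linarith)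
    rw [add_sub_cancel_right]
    field_simp
    ring
  apply monotoneOn_of_hasDerivWithinAt_nonneg (convex_Ici a)
  · exact fun t ht => (hderiv t ht).continuousAt.continuousWithinAt
  · rw [interior_Ici]
    exact fun t ht => (hderiv t (le_of_lt ht)).hasDerivWithinAt
  · rw [interior_Ici]
    exact fun t ht => mul_nonneg (mul_nonneg zero_le_two (hmono t (le_of_lt ht)))
      (sub_nonneg.mpr (hineq t (le_of_lt ht)))

theorem eventually_rpow_le_mul_sq_deriv (hp : -1 < p) (hU : Differentiable ℝ U)
    (hU' : Differentiable ℝ (deriv U)) (hpos : ∀ t ≥ a, 0 < U t)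
    (hmono : ∀ t ≥ a, 0 ≤ deriv U t) (hineq : ∀ t ≥ a, U t ^ p ≤ deriv (deriv U) t)
    (hlim : Tendsto U atTop atTop) :
    ∀ᶠ t in atTop, U t ^ (p + 1) ≤ (p + 1) * deriv U t ^ 2 := by
  have hp1 : 0 < p + 1 := by linarith
  have henergy := monotoneOn_energy hp.ne' hU hU' hpos hmono hineq
  set E₀ := deriv U a ^ 2 - 2 / (p + 1) * U a ^ (p + 1)
  have hgrowth : Tendsto (fun t => U t ^ (p + 1)) atTop atTop :=
    (tendsto_rpow_atTop hp1).comp hlim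
  filter_upwards [hgrowth.eventually_ge_atTop (-((p + 1) * E₀)), eventually_ge_atTop a]
    with t hlarge hat
  have hE : E₀ ≤ deriv U t ^ 2 - 2 / (p + 1) * U t ^ (p + 1) :=
    henergy self_mem_Ici hat hat
  have hscaled := mul_le_mul_of_nonneg_left hE hp1.le
  rw [mul_sub (p + 1) (deriv U t ^ 2), ← mul_assoc, mul_div_cancel₀ _ hp1.ne'] at hscaled
  linarith

end Energy

theorem tendsto_atBot_of_hasDerivAt_le_neg {f f' : ℝ → ℝ} {K : ℝ} (hK : 0 < K)
    (hf : ∀ᶠ x in atTop, HasDerivAt f (f' x) x ∧ f' x ≤ -K) : Tendsto f atTop atBot := by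
  obtain ⟨a, ha⟩ := eventually_atTop.mp hf
  have hline : Tendsto (fun x => (f a + K * a) + -K * x) atTop atBot :=
    tendsto_atBot_add_const_left _ _ (tendsto_id.const_mul_atTop_of_neg (neg_lt_zero.mpr hK))
  refine tendsto_atBot_mono' _ ?_ hline
  filter_upwards [eventually_gt_atTop a] with x hax
  have hcont : ContinuousOn f (Icc a x) := fun y hy =>
    (ha y hy.1).1.continuousAt.continuousWithinAt
  obtain ⟨c, hc, hslope⟩ :=
    exists_hasDerivAt_eq_slope f f' hax hcont fun y hy => (ha y hy.1.le).1
  have hdecrease : f x - f a ≤ -K * (x - a) := by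
    rw [eq_div_iff (sub_pos.mpr hax).ne'] at hslope
    rw [← hslope]
    exact mul_le_mul_of_nonneg_right (ha c hc.1.le).2 (sub_pos.mpr hax).le
  linarith

theorem sqrt_inv_le_mul_rpow_neg {u v q : ℝ} (hu : 0 < u) (hv : 0 ≤ v) (hq : 0 < q)
    (h : u ^ q ≤ q * v ^ 2) : √q⁻¹ ≤ v * u ^ (-(q / 2)) := by
  rw [Real.sqrt_le_iff]
  refine ⟨by positivity, ?_⟩
  have hsq : (u ^ (-(q / 2))) ^ 2 = (u ^ q)⁻¹ := by
    rw [← rpow_natCast, ← rpow_mul hu.le, ← rpow_neg hu.le]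
    norm_num
  rw [mul_pow, hsq, ← div_eq_mul_inv, le_div_iff₀ (rpow_pos_of_pos hu q),
    inv_mul_le_iff₀ hq]
  exact h

theorem not_eventually_rpow_le_mul_sq_deriv {U : ℝ → ℝ} {q : ℝ} (hq : 2 < q)
    (hU : Differentiable ℝ U) :
    ¬ ∀ᶠ t in atTop, 0 < U t ∧ 0 ≤ deriv U t ∧ U t ^ q ≤ q * deriv U t ^ 2 := by
  intro h
  have hW : Tendsto (fun t => U t ^ (1 - q / 2)) atTop atBot := by
    refine tendsto_atBot_of_hasDerivAt_le_neg
      (f' := fun t => deriv U t * (1 - q / 2) * U t ^ (1 - q / 2 - 1))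
      (K := (q / 2 - 1) * √q⁻¹) (mul_pos (by linarith) (by positivity)) ?_
    filter_upwards [h] with t ⟨hpos, hmono, hsq⟩
    refine ⟨(hU t).hasDerivAt.rpow_const (Or.inl hpos.ne'), ?_⟩
    have hbound := sqrt_inv_le_mul_rpow_neg hpos hmono (by linarith) hsq
    rw [show 1 - q / 2 - 1 = -(q / 2) by ring]
    nlinarith
  obtain ⟨t, hneg, hpos, -⟩ := ((hW.eventually (eventually_le_atBot 0)).and h).exists
  exact (rpow_pos_of_pos hpos _).not_ge hneg

theorem stmt11_general (p δ t₀ : ℝ) (hp : 1 < p) (hδ : 0 < δ) :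
    ¬ ∃ U : ℝ → ℝ, ContDiff ℝ 2 U ∧
      (∀ t ∈ Set.Ici t₀, deriv (deriv U) t ≥ U t ^ p) ∧
      (∀ t ∈ Set.Ici t₀, U t ≥ δ * t) ∧
      (∀ t ∈ Set.Ici t₀, deriv U t ≥ 0) := by
  rintro ⟨U, hC, hineq, hlin, hmono⟩
  have hU : Differentiable ℝ U := hC.differentiable (by norm_num)
  have hU' : Differentiable ℝ (deriv U) :=
    ((contDiff_succ_iff_deriv (n := 1)).mp hC).2.2.differentiable (by norm_num)
  set a := max t₀ 1
  have hpos : ∀ t ≥ a, 0 < U t := fun t ht => by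
    have := hlin t (le_of_max_le_left ht)
    nlinarith [le_of_max_le_right ht]
  have hmono' : ∀ t ≥ a, 0 ≤ deriv U t := fun t ht => hmono t (le_of_max_le_left ht)
  have hlim : Tendsto U atTop atTop :=
    tendsto_atTop_mono' _ (eventually_atTop.mpr ⟨t₀, hlin⟩) (tendsto_id.const_mul_atTop hδ)
  have hsq := eventually_rpow_le_mul_sq_deriv (by linarith) hU hU' hpos hmono'
    (fun t ht => hineq t (le_of_max_le_left ht)) hlim
  refine not_eventually_rpow_le_mul_sq_deriv (q := p + 1) (by linarith) hU ?_
  filter_upwards [hsq, eventually_ge_atTop a] with t hsqt hat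
  exact ⟨hpos t hat, hmono' t hat, hsqt⟩

theorem stmt11 (p δ t₀ : ℝ) (hp : 1 < p) (hδ : 0 < δ) (ht₀ : 0 ≤ t₀) :
    ¬ ∃ U : ℝ → ℝ, ContDiff ℝ 2 U ∧
      (∀ t ∈ Set.Ici t₀, deriv (deriv U) t ≥ U t ^ p) ∧
      (∀ t ∈ Set.Ici t₀, U t ≥ δ * t) ∧
      (∀ t ∈ Set.Ici t₀, deriv U t ≥ 0) :=
  stmt11_general p δ t₀ hp hδ
end
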